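/- Fix m ∈ ℕ, α, ε ∈ (0,1), and weights w_1,…,w_m ≥ 0, and view the weighted SynthBH rejection index k*_w = k*_w(𝐩) as a function of 𝐩 = (p_1,…,p_m,p̃_1,…,p̃_m) ∈ [0,1]^{2m}. Then k*_w is coordinatewise nonincreasing: if 𝐩 ⪯ 𝐪 coordinatewise, then k*_w(𝐩) ≥ k*_w(𝐪). Consequently, for each r ∈ {0,1,…,m}, the set {𝐩 ∈ [0,1]^{2m} : k*_w(𝐩) ≤ r} is an increasing set. -/

import Mathlib

noncomputable section

/-- The synthetic-powered p-value at level `δ`: `p̃^δ = p ∧ (p̃ ∨ (p − δ))`. -/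
def sp (p pt δ : ℝ) : ℝ := min p (max pt (p - δ))

/-- The `k`-th smallest element (1-indexed) of a finite family of reals. -/
def kthSmallest {m : ℕ} (v : Fin m → ℝ) (k : ℕ) : ℝ :=
  (List.insertionSort (· ≤ ·) (List.ofFn v)).getD (k - 1) 0

/-- The vector of weighted synthetic-powered p-values `p̃_j^{k w_j ε/m}`. -/
def spVecW (m : ℕ) (ε : ℝ) (w p pt : Fin m → ℝ) (k : ℕ) : Fin m → ℝ :=
  fun j => sp (p j) (pt j) (k * w j * ε / m)

/-- The weighted SynthBH rejection index
`k*_w = max {k ∈ [m] : p̃_{(k)}^{k,ε,w} ≤ αk/m}` (0 if none). -/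
def kStarW (m : ℕ) (α ε : ℝ) (w p pt : Fin m → ℝ) : ℕ :=
  ((Finset.Icc 1 m).filter
    (fun k => kthSmallest (spVecW m ε w p pt k) k ≤ α * k / m)).sup id

/-- The weighted SynthBH rejection index viewed as a function of the concatenated vector
`𝐩 = (p_1,…,p_m,p̃_1,…,p̃_m) ∈ ℝ^{2m}`. -/
def kStarWVec (m : ℕ) (α ε : ℝ) (w : Fin m → ℝ) (v : Fin (m + m) → ℝ) : ℕ :=
  kStarW m α ε w (fun j => v (Fin.castAdd m j)) (fun j => v (Fin.natAdd m j))

private lemma sp_mono {p p' pt pt' δ : ℝ} (hp : p ≤ p') (hpt : pt ≤ pt') :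
    sp p pt δ ≤ sp p' pt' δ :=
  min_le_min hp (max_le_max hpt (sub_le_sub_right hp δ))

private lemma countP_le_of_forall₂ (c : ℝ) :
    ∀ {l₁ l₂ : List ℝ}, List.Forall₂ (· ≤ ·) l₁ l₂ →
      l₂.countP (fun x => decide (x ≤ c)) ≤ l₁.countP (fun x => decide (x ≤ c)) := by
  intro l₁ l₂ h
  induction h with
  | nil => simp
  | @cons a b t₁ t₂ hab htl ih =>
    rw [List.countP_cons, List.countP_cons]
    by_cases hb : b ≤ c
    · have ha : a ≤ c := le_trans hab hb
      simp only [ha, hb, decide_true]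
      omega
    · simp only [hb, decide_false, Bool.false_eq_true, if_false]
      omega

private lemma sorted_getD_le_iff {l : List ℝ} (hs : l.Pairwise (· ≤ ·)) {i : ℕ}
    (hi : i < l.length) (c : ℝ) :
    l.getD i 0 ≤ c ↔ i + 1 ≤ l.countP (fun x => decide (x ≤ c)) := by
  rw [List.getD_eq_getElem l 0 hi]
  constructor
  · intro h
    have hlen : (l.take (i + 1)).length = i + 1 := by simp; omega
    have htake : (l.take (i + 1)).countP (fun x => decide (x ≤ c)) = i + 1 := by
      refine Eq.trans (List.countP_eq_length.mpr ?_) hlen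
      intro a ha
      rw [List.mem_take_iff_getElem] at ha
      obtain ⟨j, hj, rfl⟩ := ha
      have hj' : j < l.length := lt_of_lt_of_le hj (min_le_right _ _)
      have hji : j ≤ i := by
        have := lt_min_iff.mp hj
        omega
      have hle : l.get ⟨j, hj'⟩ ≤ l.get ⟨i, hi⟩ :=
        hs.rel_get_of_le (by simpa using hji)
      simpa using le_trans hle h
    calc i + 1 = (l.take (i + 1)).countP (fun x => decide (x ≤ c)) := htake.symm
      _ ≤ l.countP (fun x => decide (x ≤ c)) := by
          conv_rhs => rw [← List.take_append_drop (i + 1) l]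
          rw [List.countP_append]; omega
  · intro h
    by_contra hgt
    push_neg at hgt
    have hdrop : (l.drop i).countP (fun x => decide (x ≤ c)) = 0 := by
      rw [List.countP_eq_zero]
      intro a ha
      rw [List.mem_drop_iff_getElem] at ha
      obtain ⟨j, hj, rfl⟩ := ha
      have hj' : i + j < l.length := by omega
      have hle : l.get ⟨i, hi⟩ ≤ l.get ⟨i + j, hj'⟩ :=
        hs.rel_get_of_le (by simp)
      simp only [decide_eq_true_eq]
      intro hle2
      exact absurd (le_trans hle (by simpa using hle2)) (not_le.mpr hgt)
    have hb : l.countP (fun x => decide (x ≤ c)) ≤ i := by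
      conv_lhs => rw [← List.take_append_drop i l]
      rw [List.countP_append, hdrop]
      have h1 : (l.take i).countP (fun x => decide (x ≤ c)) ≤ (l.take i).length :=
        List.countP_le_length
      have h2 : (l.take i).length ≤ i := by simp
      omega
    omega

private lemma kthSmallest_mono {m : ℕ} {v u : Fin m → ℝ} (h : ∀ j, v j ≤ u j)
    {k : ℕ} (hk1 : 1 ≤ k) (hkm : k ≤ m) : kthSmallest v k ≤ kthSmallest u k := by
  unfold kthSmallest
  set lv := List.insertionSort (· ≤ ·) (List.ofFn v) with hlv
  set lu := List.insertionSort (· ≤ ·) (List.ofFn u) with hlu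
  have hlvlen : lv.length = m := by
    rw [hlv, (List.perm_insertionSort _ _).length_eq, List.length_ofFn]
  have hlulen : lu.length = m := by
    rw [hlu, (List.perm_insertionSort _ _).length_eq, List.length_ofFn]
  have hsv : lv.Pairwise (· ≤ ·) := List.pairwise_insertionSort _ _
  have hsu : lu.Pairwise (· ≤ ·) := List.pairwise_insertionSort _ _
  have hi : k - 1 < lv.length := by omega
  have hi' : k - 1 < lu.length := by omega
  set c := lu.getD (k - 1) 0 with hc
  have h1 : k - 1 + 1 ≤ lu.countP (fun x => decide (x ≤ c)) :=
    (sorted_getD_le_iff hsu hi' c).mp le_rfl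
  have hforall : List.Forall₂ (· ≤ ·) (List.ofFn v) (List.ofFn u) := by
    rw [List.forall₂_iff_get]
    refine ⟨by simp, fun i h₁ h₂ => ?_⟩
    simp only [List.get_ofFn]
    exact h _
  have h2 : lu.countP (fun x => decide (x ≤ c)) ≤ lv.countP (fun x => decide (x ≤ c)) := by
    rw [(List.perm_insertionSort _ _).countP_eq, (List.perm_insertionSort _ _).countP_eq]
    exact countP_le_of_forall₂ c hforall
  exact (sorted_getD_le_iff hsv hi c).mpr (le_trans h1 h2)

private lemma kStarW_mono (m : ℕ) (α ε : ℝ) (w p pt p' pt' : Fin m → ℝ)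
    (hp : ∀ j, p j ≤ p' j) (hpt : ∀ j, pt j ≤ pt' j) :
    kStarW m α ε w p' pt' ≤ kStarW m α ε w p pt := by
  apply Finset.sup_mono
  intro k hk
  rw [Finset.mem_filter] at hk ⊢
  obtain ⟨hmem, hle⟩ := hk
  refine ⟨hmem, le_trans ?_ hle⟩
  rw [Finset.mem_Icc] at hmem
  exact kthSmallest_mono (fun j => sp_mono (hp j) (hpt j)) hmem.1 hmem.2

/-- **The weighted SynthBH rejection index is coordinatewise nonincreasing**, and
consequently each sublevel set `{𝐩 ∈ [0,1]^{2m} : k*_w(𝐩) ≤ r}` is an increasing set. -/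
theorem kStarW_antitone_and_sublevel_increasing
    (m : ℕ) (α ε : ℝ) (hα : α ∈ Set.Ioo (0 : ℝ) 1) (hε : ε ∈ Set.Ioo (0 : ℝ) 1)
    (w : Fin m → ℝ) (hw : ∀ j, 0 ≤ w j) :
    (∀ v u : Fin (m + m) → ℝ,
      (∀ i, v i ∈ Set.Icc (0 : ℝ) 1) → (∀ i, u i ∈ Set.Icc (0 : ℝ) 1) →
      (∀ i, v i ≤ u i) → kStarWVec m α ε w u ≤ kStarWVec m α ε w v) ∧
    (∀ r ≤ m, ∀ v u : Fin (m + m) → ℝ,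
      (∀ i, v i ∈ Set.Icc (0 : ℝ) 1) → (∀ i, u i ∈ Set.Icc (0 : ℝ) 1) →
      kStarWVec m α ε w v ≤ r → (∀ i, v i ≤ u i) → kStarWVec m α ε w u ≤ r) := by
  have key : ∀ v u : Fin (m + m) → ℝ, (∀ i, v i ≤ u i) →
      kStarWVec m α ε w u ≤ kStarWVec m α ε w v := by
    intro v u hvu
    exact kStarW_mono m α ε w _ _ _ _ (fun j => hvu _) (fun j => hvu _)
  exact ⟨fun v u _ _ h => key v u h,
    fun r _ v u _ _ hv hvu => le_trans (key v u hvu) hv⟩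

end
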